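/- arXiv:2301.09028 — 2 statements merged into one kernel-verified Lean document; each statement's English description precedes it below -/
import Mathlib

section
/- Let D be a DAG in which X is not an ancestor of Y, X and Y are non-adjacent, and X,Y are k-covered. Then for every set T with |T| ≤ k, there exists a d-connecting path between X and Y given T whose first edge points into X. -/
/-- A mixed graph: directed edges `dir` and bidirected edges `bi`. -/
structure MixedGraph (V : Type) where
  dir : V → V → Prop
  bi : V → V → Prop

namespace MixedGraph

variable {V : Type} (G : MixedGraph V)

/-- symmetric view of bidirected adjacency -/
def biAdj (a b : V) : Prop := G.bi a b ∨ G.bi b a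

/-- `step G u v hu hv` : an edge between `u` and `v` with arrowhead-at-`u` = `hu`
and arrowhead-at-`v` = `hv`. -/
def step (u v : V) (hu hv : Bool) : Prop :=
  (hu = false ∧ hv = true ∧ G.dir u v) ∨
  (hu = true ∧ hv = false ∧ G.dir v u) ∨
  (hu = true ∧ hv = true ∧ G.biAdj u v)

/-- Walks in a mixed graph, recording the arrowhead marks of each traversed edge. -/
inductive Walk : V → V → Type _
  | nil (v : V) : Walk v v
  | cons {u v w : V} (hu hv : Bool) (h : G.step u v hu hv) (p : Walk v w) : Walk u w

variable {G}

def Walk.support : ∀ {a b : V}, G.Walk a b → List V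
  | _, _, .nil v => [v]
  | _, _, .cons (u := u) _ _ _ p => u :: p.support

/-- List of internal vertices together with the two arrowhead marks adjacent to them
(incoming mark, outgoing mark): a vertex is a collider iff both are `true`. -/
def Walk.marksInternal : ∀ {a b : V}, G.Walk a b → List (V × Bool × Bool)
  | _, _, .nil _ => []
  | _, _, .cons _ hv _ q =>
    match q with
    | .nil _ => []
    | .cons (u := m) hu' _ _ _ => (m, hv, hu') :: q.marksInternal

/-- The arrowhead mark at the first vertex of a walk (if nonempty). -/
def Walk.firstHead : ∀ {a b : V}, G.Walk a b → Option Bool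
  | _, _, .nil _ => none
  | _, _, .cons hu _ _ _ => some hu

/-- The arrowhead mark at the last vertex of a walk (if nonempty). -/
def Walk.lastHead : ∀ {a b : V}, G.Walk a b → Option Bool
  | _, _, .nil _ => none
  | _, _, .cons _ hv _ q =>
    match q with
    | .nil _ => some hv
    | .cons _ _ _ _ => q.lastHead

variable (G)

/-- Ancestorship in a mixed graph: directed edges only (reflexive). -/
def Anc (a b : V) : Prop := Relation.ReflTransGen G.dir a b

variable {G}

/-- A walk is d-connecting given `c` iff every collider on it is an ancestor of some
node of `c` and every non-collider is not in `c`. -/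
def Walk.DConnecting (c : Set V) {a b : V} (w : G.Walk a b) : Prop :=
  ∀ m ∈ w.marksInternal,
    ((m.2.1 = true ∧ m.2.2 = true) → ∃ x ∈ c, G.Anc m.1 x) ∧
    (¬ (m.2.1 = true ∧ m.2.2 = true) → m.1 ∉ c)

/-- A walk is active given `c` iff every collider on it is in `c` and every
non-collider is not in `c`. -/
def Walk.Active (c : Set V) {a b : V} (w : G.Walk a b) : Prop :=
  ∀ m ∈ w.marksInternal,
    ((m.2.1 = true ∧ m.2.2 = true) → m.1 ∈ c) ∧
    (¬ (m.2.1 = true ∧ m.2.2 = true) → m.1 ∉ c)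

/-- A path is a walk without repeated vertices. -/
def Walk.IsPath {a b : V} (w : G.Walk a b) : Prop := w.support.Nodup

variable (G)

/-- d-connection: existence of a d-connecting path. -/
def DConn (c : Set V) (a b : V) : Prop :=
  ∃ w : G.Walk a b, w.IsPath ∧ w.DConnecting c

/-- d-separation (m-separation in mixed graphs). -/
def DSep (c : Set V) (a b : V) : Prop := ¬ G.DConn c a b

/-- Adjacency in a mixed graph. -/
def Adj (a b : V) : Prop := G.dir a b ∨ G.dir b a ∨ G.biAdj a b

end MixedGraph

/-- View a directed graph as a mixed graph with no bidirected edges. -/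
def ofDAG {V : Type} (E : V → V → Prop) : MixedGraph V := ⟨E, fun _ _ => False⟩

/-- Acyclicity of a directed graph. -/
def Acyclic {V : Type} (E : V → V → Prop) : Prop := ∀ a, ¬ Relation.TransGen E a a

/-- `a, b` are `k`-covered in `E`: no conditioning set of size at most `k` d-separates them. -/
def KCovered {V : Type} (E : V → V → Prop) (k : ℕ) (a b : V) : Prop :=
  ∀ c : Finset V, c.card ≤ k → ¬ (ofDAG E).DSep (↑c) a b

/-- The `k`-closure of a DAG: every `k`-covered pair is adjacent, oriented by
ancestrality in `E`, bidirected when neither endpoint is an ancestor of the other. -/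
def kClosure {V : Type} (E : V → V → Prop) (k : ℕ) : MixedGraph V where
  dir a b := KCovered E k a b ∧ Relation.TransGen E a b
  bi a b := KCovered E k a b ∧ KCovered E k b a ∧
    ¬ Relation.ReflTransGen E a b ∧ ¬ Relation.ReflTransGen E b a

/-- Maximal ancestral graph: no directed cycles, no almost directed cycles,
and every non-adjacent pair of distinct nodes is d-separable. -/
def IsMAG {V : Type} (G : MixedGraph V) : Prop :=
  (∀ a, ¬ Relation.TransGen G.dir a a) ∧
  (∀ a b, Relation.TransGen G.dir a b → ¬ G.biAdj a b) ∧
  (∀ a b, a ≠ b → ¬ G.Adj a b → ∃ S : Set V, G.DSep S a b)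

/-- k-Markov equivalence of two directed graphs. -/
def kMarkovEquiv {V : Type} (E₁ E₂ : V → V → Prop) (k : ℕ) : Prop :=
  ∀ a b, ∀ c : Finset V, c.card ≤ k →
    ((ofDAG E₁).DSep (↑c) a b ↔ (ofDAG E₂).DSep (↑c) a b)

/-- Markov equivalence of two mixed graphs. -/
def MarkovEquiv {V : Type} (G₁ G₂ : MixedGraph V) : Prop :=
  ∀ a b, ∀ c : Set V, G₁.DSep c a b ↔ G₂.DSep c a b

section Aux

open MixedGraph

variable {V : Type} {E : V → V → Prop}

private lemma stepE {u v : V} {hu hv : Bool} (h : (ofDAG E).step u v hu hv) :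
    (hu = false ∧ hv = true ∧ E u v) ∨ (hu = true ∧ hv = false ∧ E v u) := by
  rcases h with h | h | ⟨_, _, h⟩
  · exact Or.inl h
  · exact Or.inr h
  · rcases h with h | h <;> exact h.elim

private lemma dsub {c : Set V} {a b w : V} {hu hv : Bool} {h : (ofDAG E).step a b hu hv}
    {p : (ofDAG E).Walk b w} (H : (Walk.cons hu hv h p).DConnecting c) :
    p.DConnecting c := by
  intro m hm
  apply H
  cases p with
  | nil => simp [Walk.marksInternal] at hm
  | cons hu' hv' h' q => exact List.mem_cons_of_mem _ hm

private lemma l1 (hE : Acyclic E) {X Y : V} (hXY : ¬ Relation.ReflTransGen E X Y)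
    (T' : Finset V) (hT' : ∀ t ∈ T', ¬ Relation.ReflTransGen E X t) :
    ∀ {b : V} (p : (ofDAG E).Walk b Y) {u : V} (hv : Bool)
      (h : (ofDAG E).step u b false hv),
      (Walk.cons false hv h p).DConnecting ↑T' →
      Relation.ReflTransGen E X u → False := by
  intro b p
  induction p with
  | nil =>
      intro u hv h _ hanc
      rcases stepE h with ⟨_, _, hE'⟩ | ⟨h1, _, _⟩
      · exact hXY (hanc.tail hE')
      · simp at h1
  | @cons b c Yv hu' hv' h' q ih =>
      intro u hv h hdc hanc
      rcases stepE h with ⟨_, hv1, hEub⟩ | ⟨h1, _, _⟩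
      · subst hv1
        have hb : Relation.ReflTransGen E X _ := hanc.tail hEub
        cases hu' with
        | true =>
            obtain ⟨t, ht, hanc'⟩ :=
              (hdc (_, true, true) List.mem_cons_self).1 ⟨rfl, rfl⟩
            exact hT' t (Finset.mem_coe.mp ht)
              (hb.trans (show Relation.ReflTransGen E _ t from hanc'))
        | false =>
            exact ih hXY hv' h' (dsub hdc) hb
      · simp at h1

private lemma l2 (hE : Acyclic E) {X Y : V} (hXY : ¬ Relation.ReflTransGen E X Y)
    (T T' : Finset V)
    (hT'1 : ∀ t ∈ T', t ∈ T ∧ ¬ Relation.ReflTransGen E X t)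
    (hT'2 : ∀ t ∈ T, ¬ Relation.ReflTransGen E X t → t ∈ T') :
    ∀ {u : V} (w : (ofDAG E).Walk u Y), w.DConnecting ↑T' →
      (u = X ∨ ¬ Relation.ReflTransGen E X u) → w.DConnecting ↑T := by
  intro u w
  induction w with
  | nil => intro _ _ m hm; simp [Walk.marksInternal] at hm
  | @cons u b Yv hu hv h p ih =>
      intro hdc hX
      revert ih
      cases p with
      | nil => intro _ m hm; simp [Walk.marksInternal] at hm
      | @cons b2 c Yv2 hu' hv' h' q =>
          intro ih
          have hb : ¬ Relation.ReflTransGen E X b := by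
            intro hDb
            by_cases hcol : hv = true ∧ hu' = true
            · obtain ⟨t, ht, hanc⟩ :=
                (hdc (_, hv, hu') List.mem_cons_self).1 hcol
              exact (hT'1 t (Finset.mem_coe.mp ht)).2
                (hDb.trans (show Relation.ReflTransGen E _ t from hanc))
            · rcases stepE h with ⟨_, hv1, hEub⟩ | ⟨_, _, hEbu⟩
              · subst hv1
                have hu'f : hu' = false := by
                  cases hu' with
                  | true => exact absurd ⟨rfl, rfl⟩ hcol
                  | false => rfl
                subst hu'f
                exact l1 hE hXY T' (fun t ht => (hT'1 t ht).2) q hv' h' (dsub hdc) hDb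
              · rcases hX with hXu | hX
                · exact hE X (Relation.TransGen.tail' hDb (hXu ▸ hEbu))
                · exact hX (hDb.tail hEbu)
          intro m hm
          rcases List.mem_cons.mp hm with hm | hm
          · subst hm
            refine ⟨fun hc => ?_, fun hnc hmT => ?_⟩
            · obtain ⟨t, ht, hanc⟩ :=
                (hdc (_, hv, hu') List.mem_cons_self).1 hc
              exact ⟨t, Finset.mem_coe.mpr ((hT'1 t (Finset.mem_coe.mp ht)).1), hanc⟩
            · exact (hdc (_, hv, hu') List.mem_cons_self).2 hnc
                (Finset.mem_coe.mpr (hT'2 _ (Finset.mem_coe.mp hmT) hb))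
          · exact ih hXY (dsub hdc) (Or.inr hb) m hm

end Aux

/-- if `X` is not an ancestor of `Y`, `X,Y` are non-adjacent and
`k`-covered, then given any `T` with `|T| ≤ k` there is a d-connecting path between
them whose first edge points into `X`. -/
theorem kcovered_arrowhead_path {V : Type} (E : V → V → Prop) (hE : Acyclic E)
    (k : ℕ) (X Y : V) (hXY : ¬ Relation.ReflTransGen E X Y)
    (hadj₁ : ¬ E X Y) (hadj₂ : ¬ E Y X) (hcov : KCovered E k X Y) :
    ∀ T : Finset V, T.card ≤ k →
      ∃ p : (ofDAG E).Walk X Y, p.IsPath ∧ p.DConnecting (↑T) ∧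
        p.firstHead = some true := by
  intro T hT
  classical
  set T' : Finset V := T.filter (fun v => ¬ Relation.ReflTransGen E X v) with hT'def
  have hcard : T'.card ≤ k := le_trans (Finset.card_filter_le _ _) hT
  have hconn : (ofDAG E).DConn ↑T' X Y := not_not.mp (hcov T' hcard)
  obtain ⟨q, hq, hdc⟩ := hconn
  have hT'1 : ∀ t ∈ T', t ∈ T ∧ ¬ Relation.ReflTransGen E X t := by
    intro t ht
    simpa [hT'def, Finset.mem_filter] using ht
  have hT'2 : ∀ t ∈ T, ¬ Relation.ReflTransGen E X t → t ∈ T' := by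
    intro t ht h2
    simp [hT'def, Finset.mem_filter, ht, h2]
  cases q with
  | nil => exact absurd Relation.ReflTransGen.refl hXY
  | cons hu hv h p =>
      cases hu with
      | false =>
          exact absurd (l1 hE hXY T' (fun t ht => (hT'1 t ht).2) p hv h hdc
            Relation.ReflTransGen.refl) not_false
      | true =>
          exact ⟨MixedGraph.Walk.cons true hv h p, hq,
            l2 hE hXY T T' hT'1 hT'2 _ hdc (Or.inl rfl), rfl⟩
end

section
/- For any DAG D and natural number k, the k-closure cl_k(D) is a maximal ancestral graph: it has no directed cycles, no almost directed cycles, and every pair of non-adjacent nodes in cl_k(D) can be d-separated by some subset of the vertices. -/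
namespace MixedGraph

variable {V : Type} {G : MixedGraph V}

lemma biAdj_symm {u v : V} (h : G.biAdj u v) : G.biAdj v u := h.symm

lemma step_symm {u v : V} {hu hv : Bool} (h : G.step u v hu hv) : G.step v u hv hu := by
  rcases h with ⟨h1, h2, h3⟩ | ⟨h1, h2, h3⟩ | ⟨h1, h2, h3⟩
  · exact Or.inr (Or.inl ⟨h2, h1, h3⟩)
  · exact Or.inl ⟨h2, h1, h3⟩
  · exact Or.inr (Or.inr ⟨h2, h1, biAdj_symm h3⟩)

namespace Walk

def append : ∀ {a x b : V}, G.Walk a x → G.Walk x b → G.Walk a b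
  | _, _, _, .nil _, q => q
  | _, _, _, .cons hu hv h p, q => .cons hu hv h (p.append q)

def length : ∀ {a b : V}, G.Walk a b → ℕ
  | _, _, .nil _ => 0
  | _, _, .cons _ _ _ p => p.length + 1

@[simp] lemma nil_append {x b : V} (q : G.Walk x b) : (Walk.nil x).append q = q := rfl

@[simp] lemma cons_append {a v x b : V} {hu hv : Bool} (h : G.step a v hu hv)
    (p : G.Walk v x) (q : G.Walk x b) :
    (Walk.cons hu hv h p).append q = Walk.cons hu hv h (p.append q) := rfl

@[simp] lemma length_nil {v : V} : (Walk.nil (G := G) v).length = 0 := rfl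

@[simp] lemma length_cons {a v b : V} {hu hv : Bool} (h : G.step a v hu hv) (p : G.Walk v b) :
    (Walk.cons hu hv h p).length = p.length + 1 := rfl

lemma length_append {a x b : V} (p : G.Walk a x) (q : G.Walk x b) :
    (p.append q).length = p.length + q.length := by
  induction p with
  | nil => simp
  | cons hu hv h p ih => simp [ih]; omega

@[simp] lemma firstHead_nil {v : V} : (Walk.nil (G := G) v).firstHead = none := rfl

@[simp] lemma firstHead_cons {a v b : V} {hu hv : Bool} (h : G.step a v hu hv) (p : G.Walk v b) :
    (Walk.cons hu hv h p).firstHead = some hu := rfl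

@[simp] lemma lastHead_nil {v : V} : (Walk.nil (G := G) v).lastHead = none := rfl

@[simp] lemma lastHead_cons_nil {a v : V} {hu hv : Bool} (h : G.step a v hu hv) :
    (Walk.cons hu hv h (Walk.nil v)).lastHead = some hv := rfl

@[simp] lemma lastHead_cons_cons {a v v2 b : V} {hu hv hu2 hv2 : Bool} (h : G.step a v hu hv)
    (h2 : G.step v v2 hu2 hv2) (p : G.Walk v2 b) :
    (Walk.cons hu hv h (Walk.cons hu2 hv2 h2 p)).lastHead =
      (Walk.cons hu2 hv2 h2 p).lastHead := rfl

lemma lastHead_isSome_cons : ∀ {a v b : V} {hu hv : Bool} (h : G.step a v hu hv)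
    (p : G.Walk v b), ∃ l, (Walk.cons hu hv h p).lastHead = some l := by
  intro a v b hu hv h p
  induction p generalizing a hu hv with
  | nil => exact ⟨hv, rfl⟩
  | cons hu2 hv2 h2 p'' ih =>
    rw [lastHead_cons_cons]
    exact ih h2

@[simp] lemma marksInternal_nil {v : V} : (Walk.nil (G := G) v).marksInternal = [] := rfl

@[simp] lemma marksInternal_cons_nil {a v : V} {hu hv : Bool} (h : G.step a v hu hv) :
    (Walk.cons hu hv h (Walk.nil v)).marksInternal = [] := rfl

@[simp] lemma marksInternal_cons_cons {a v v2 b : V} {hu hv hu2 hv2 : Bool} (h : G.step a v hu hv)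
    (h2 : G.step v v2 hu2 hv2) (p : G.Walk v2 b) :
    (Walk.cons hu hv h (Walk.cons hu2 hv2 h2 p)).marksInternal =
      (v, hv, hu2) :: (Walk.cons hu2 hv2 h2 p).marksInternal := rfl

lemma marksInternal_cons_sub {a v b : V} {hu hv : Bool} (h : G.step a v hu hv) (p : G.Walk v b) :
    p.marksInternal ⊆ (Walk.cons hu hv h p).marksInternal := by
  cases p with
  | nil => simp
  | cons hu' hv' h' p' =>
    rw [marksInternal_cons_cons]
    exact fun m hm => List.mem_cons_of_mem _ hm

lemma DConnecting.tail {c : Set V} {a v b : V} {hu hv : Bool} {h : G.step a v hu hv}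
    {p : G.Walk v b} (hc : (Walk.cons hu hv h p).DConnecting c) : p.DConnecting c :=
  fun m hm => hc m (marksInternal_cons_sub h p hm)

lemma firstHead_append {a x b : V} (p : G.Walk a x) (q : G.Walk x b) {h0 : Bool}
    (hp : p.firstHead = some h0) : (p.append q).firstHead = some h0 := by
  cases p with
  | nil => simp at hp
  | cons hu hv h p' => simpa using hp

lemma lastHead_append_some {a x b : V} (p : G.Walk a x) (q : G.Walk x b) {l : Bool}
    (hq : q.lastHead = some l) : (p.append q).lastHead = some l := by
  induction p with
  | nil => simpa using hq
  | cons hu hv h p' ih =>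
    rw [cons_append]
    have h1 := ih q hq
    cases hpq : p'.append q with
    | nil =>
      rw [hpq] at h1; simp at h1
    | cons hu2 hv2 h2 p2 =>
      rw [hpq] at h1
      rw [lastHead_cons_cons]
      exact h1

lemma lastHead_append_nil {a x : V} (p : G.Walk a x) :
    (p.append (Walk.nil x)).lastHead = p.lastHead := by
  induction p with
  | nil => rfl
  | cons hu hv h p' ih =>
    cases p' with
    | nil => rfl
    | cons hu2 hv2 h2 p'' =>
      rw [cons_append, cons_append, lastHead_cons_cons, lastHead_cons_cons, ← cons_append]
      exact ih

lemma marksInternal_append {a x b : V} (p : G.Walk a x) (q : G.Walk x b) :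
    (p.append q).marksInternal = p.marksInternal ++
      (match p.lastHead, q.firstHead with
        | some l, some f => (x, l, f) :: q.marksInternal
        | _, _ => q.marksInternal) := by
  induction p with
  | nil => simp
  | cons hu hv h p' ih =>
    rw [cons_append]
    cases p' with
    | nil =>
      cases q with
      | nil => simp
      | cons hu' hv' h' q' => simp
    | cons hu2 hv2 h2 p'' =>
      have ihq := ih q
      rw [lastHead_cons_cons, marksInternal_cons_cons, cons_append, marksInternal_cons_cons,
        ← cons_append, ihq]
      simp

def reverse : ∀ {a b : V}, G.Walk a b → G.Walk b a
  | _, _, .nil v => .nil v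
  | _, _, .cons hu hv h p => p.reverse.append (.cons hv hu (step_symm h) (.nil _))

@[simp] lemma reverse_nil {v : V} : (Walk.nil (G := G) v).reverse = Walk.nil v := rfl

lemma reverse_cons {a v b : V} {hu hv : Bool} (h : G.step a v hu hv) (p : G.Walk v b) :
    (Walk.cons hu hv h p).reverse
      = p.reverse.append (Walk.cons hv hu (step_symm h) (Walk.nil a)) := rfl

lemma firstHead_reverse : ∀ {a b : V} (p : G.Walk a b), p.reverse.firstHead = p.lastHead := by
  intro a b p
  induction p with
  | nil => rfl
  | cons hu hv h p' ih =>
    rw [reverse_cons]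
    cases p' with
    | nil => rfl
    | cons hu2 hv2 h2 p'' =>
      obtain ⟨l, hl⟩ := lastHead_isSome_cons h2 p''
      have hrev : (Walk.cons hu2 hv2 h2 p'').reverse.firstHead = some l := by
        rw [ih, hl]
      rw [firstHead_append _ _ hrev, lastHead_cons_cons, hl]

lemma lastHead_reverse {a b : V} (p : G.Walk a b) : p.reverse.lastHead = p.firstHead := by
  cases p with
  | nil => rfl
  | cons hu hv h p' =>
    rw [reverse_cons, firstHead_cons]
    exact lastHead_append_some _ _ (by simp)

lemma marksInternal_reverse : ∀ {a b : V} (p : G.Walk a b),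
    p.reverse.marksInternal = (p.marksInternal.map (fun m => (m.1, m.2.2, m.2.1))).reverse := by
  intro a b p
  induction p with
  | nil => rfl
  | cons hu hv h p' ih =>
    rw [reverse_cons, marksInternal_append, ih, lastHead_reverse]
    cases p' with
    | nil => simp
    | cons hu2 hv2 h2 p'' =>
      obtain ⟨l, hl⟩ := lastHead_isSome_cons h2 p''
      rw [firstHead_cons, marksInternal_cons_cons]
      simp

end Walk

end MixedGraph

namespace MixedGraph

variable {V : Type} {G : MixedGraph V}

namespace Walk

@[simp] lemma support_nil {v : V} : (Walk.nil (G := G) v).support = [v] := rfl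

@[simp] lemma support_cons {a v b : V} {hu hv : Bool} (h : G.step a v hu hv) (p : G.Walk v b) :
    (Walk.cons hu hv h p).support = a :: p.support := rfl

lemma support_ne_nil {a b : V} (p : G.Walk a b) : p.support ≠ [] := by
  cases p <;> simp

lemma support_head {a b : V} (p : G.Walk a b) : p.support = a :: p.support.tail := by
  cases p <;> rfl

lemma support_append {a x b : V} (p : G.Walk a x) (q : G.Walk x b) :
    (p.append q).support = p.support.dropLast ++ q.support := by
  induction p with
  | nil => simp
  | cons hu hv h p' ih =>
    rw [cons_append, support_cons, support_cons, ih]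
    rw [List.dropLast_cons_of_ne_nil (support_ne_nil p')]
    simp

lemma support_reverse : ∀ {a b : V} (p : G.Walk a b), p.reverse.support = p.support.reverse := by
  intro a b p
  induction p with
  | nil => rfl
  | cons hu hv h p' ih =>
    rw [reverse_cons, support_append, ih, support_cons]
    simp
    conv_rhs => rw [support_head p']
    simp

lemma DConnecting.reverse {c : Set V} {a b : V} {p : G.Walk a b}
    (hc : p.DConnecting c) : p.reverse.DConnecting c := by
  intro m hm
  rw [marksInternal_reverse, List.mem_reverse, List.mem_map] at hm
  obtain ⟨m0, hm0, hem⟩ := hm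
  have := hc m0 hm0
  subst hem
  refine ⟨fun hcol => ?_, fun hncol => ?_⟩
  · exact this.1 ⟨hcol.2, hcol.1⟩
  · exact this.2 (fun hcol => hncol ⟨hcol.2, hcol.1⟩)

lemma exists_split_marks : ∀ {a b : V} (q : G.Walk a b) {m : V × Bool × Bool},
    m ∈ q.marksInternal →
    ∃ (q1 : G.Walk a m.1) (q2 : G.Walk m.1 b),
      q.marksInternal = q1.marksInternal ++ m :: q2.marksInternal ∧
      q1.lastHead = some m.2.1 ∧ q2.firstHead = some m.2.2 ∧ q1.firstHead = q.firstHead := by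
  intro a b q
  induction q with
  | nil => intro m hm; simp at hm
  | @cons a v b hu hv h p ih =>
    intro m hm
    cases p with
    | nil => simp at hm
    | @cons v v2 b hu2 hv2 h2 p'' =>
      rw [marksInternal_cons_cons] at hm
      rcases List.mem_cons.mp hm with hm1 | hm2
      · subst hm1
        exact ⟨Walk.cons hu hv h (Walk.nil v), Walk.cons hu2 hv2 h2 p'',
          by simp, by simp, by simp, by simp⟩
      · obtain ⟨q1', q2', hdec, hl1, hf2, hff⟩ := ih hm2
        cases q1' with
        | nil => simp at hl1
        | @cons v w2 m1v hu3 hv3 h3 q1'' =>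
          simp only [firstHead_cons] at hff
          have hff' : hu3 = hu2 := by
            injection hff.symm with hh; exact hh.symm
          subst hff'
          refine ⟨Walk.cons hu hv h (Walk.cons hu3 hv3 h3 q1''), q2', ?_, ?_, hf2, by simp⟩
          · rw [marksInternal_cons_cons, marksInternal_cons_cons, hdec]
            simp
          · rw [lastHead_cons_cons]
            exact hl1

lemma exists_split_at : ∀ {a b : V} (W : G.Walk a b) (x : V), x ∈ W.support →
    ∃ (A : G.Walk a x) (C : G.Walk x b), W = A.append C := by
  intro a b W
  induction W with
  | nil =>
    intro x hx
    simp at hx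
    subst hx
    exact ⟨Walk.nil _, Walk.nil _, rfl⟩
  | @cons a v b hu hv h p ih =>
    intro x hx
    rw [support_cons] at hx
    rcases List.mem_cons.mp hx with h1 | h2
    · subst h1
      exact ⟨Walk.nil _, Walk.cons hu hv h p, rfl⟩
    · obtain ⟨A', C, hAC⟩ := ih x h2
      exact ⟨Walk.cons hu hv h A', C, by rw [cons_append, hAC]⟩

lemma exists_split_dup : ∀ {a b : V} (W : G.Walk a b), ¬ W.support.Nodup →
    ∃ (x : V) (A : G.Walk a x) (B : G.Walk x x) (C : G.Walk x b),
      W = A.append (B.append C) ∧ B.length ≠ 0 := by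
  intro a b W
  induction W with
  | nil => intro hnd; simp at hnd
  | @cons a v b hu hv h p ih =>
    intro hnd
    rw [support_cons, List.nodup_cons] at hnd
    push_neg at hnd
    by_cases ha : a ∈ p.support
    · obtain ⟨A', C, hAC⟩ := exists_split_at p a ha
      refine ⟨a, Walk.nil a, Walk.cons hu hv h A', C, ?_, by simp⟩
      rw [nil_append, cons_append, hAC]
    · obtain ⟨x, A, B, C, hW, hB⟩ := ih (hnd ha)
      exact ⟨x, Walk.cons hu hv h A, B, C, by rw [cons_append, hW], hB⟩

end Walk

end MixedGraph

section DAGLemmas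

open MixedGraph Relation

variable {V : Type} {E : V → V → Prop}

lemma step_ofDAG {u v : V} {hu hv : Bool} :
    (ofDAG E).step u v hu hv ↔
      (hu = false ∧ hv = true ∧ E u v) ∨ (hu = true ∧ hv = false ∧ E v u) := by
  constructor
  · rintro (h | h | ⟨_, _, h | h⟩)
    · exact Or.inl h
    · exact Or.inr h
    · exact absurd h id
    · exact absurd h id
  · rintro (h | h)
    · exact Or.inl h
    · exact Or.inr (Or.inl h)

lemma anc_ofDAG {u v : V} : (ofDAG E).Anc u v ↔ ReflTransGen E u v := Iff.rfl

lemma chain1 {c : Set V} : ∀ {x y : V} (q : (ofDAG E).Walk x y), q.DConnecting c →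
    q.firstHead = some false →
    TransGen E x y ∨ ∃ z ∈ c, ReflTransGen E x z := by
  intro x y q
  induction q with
  | nil => intro _ hf; simp at hf
  | @cons x v y hu hv h p ih =>
    intro hc hf
    simp only [Walk.firstHead_cons, Option.some_inj] at hf
    subst hf
    have hEx : E x v ∧ hv = true := by
      rcases step_ofDAG.mp h with ⟨_, h2, h3⟩ | ⟨h1, _, _⟩
      · exact ⟨h3, h2⟩
      · exact absurd h1 (by simp)
    cases p with
    | nil => exact Or.inl (TransGen.single hEx.1)
    | @cons v v2 y hu2 hv2 h2 p'' =>
      have hm := hc (v, hv, hu2) (by rw [Walk.marksInternal_cons_cons]; exact List.mem_cons_self)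
      cases hu2eq : hu2 with
      | true =>
        obtain ⟨z, hz, hanc⟩ := hm.1 ⟨hEx.2, hu2eq⟩
        exact Or.inr ⟨z, hz, ReflTransGen.head hEx.1 hanc⟩
      | false =>
        subst hu2eq
        rcases ih hc.tail (by simp) with h1 | ⟨z, hz, hzr⟩
        · exact Or.inl (TransGen.head hEx.1 h1)
        · exact Or.inr ⟨z, hz, ReflTransGen.head hEx.1 hzr⟩

lemma chain1_last {c : Set V} {x y : V} (q : (ofDAG E).Walk x y) (hc : q.DConnecting c)
    (hl : q.lastHead = some false) :
    TransGen E y x ∨ ∃ z ∈ c, ReflTransGen E y z := by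
  apply chain1 q.reverse hc.reverse
  rw [Walk.firstHead_reverse]
  exact hl

lemma exists_dirWalk {u v : V} (h : TransGen E u v) :
    ∃ W : (ofDAG E).Walk u v, W.firstHead = some false ∧ W.lastHead = some true ∧
      ∀ m ∈ W.marksInternal, m.2.1 = true ∧ m.2.2 = false ∧ TransGen E u m.1 := by
  induction h using TransGen.head_induction_on with
  | single e =>
    exact ⟨Walk.cons false true (step_ofDAG.mpr (Or.inl ⟨rfl, rfl, e⟩)) (Walk.nil v), by simp, by simp, by simp⟩
  | head e htg ih =>
    rename_i a c'
    obtain ⟨W', hf, hl, hm⟩ := ih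
    refine ⟨Walk.cons false true (step_ofDAG.mpr (Or.inl ⟨rfl, rfl, e⟩)) W', by simp, ?_, ?_⟩
    · cases W' with
      | nil => simp at hf
      | cons hu2 hv2 h2 p2 => rw [Walk.lastHead_cons_cons]; exact hl
    · cases W' with
      | nil => simp at hf
      | @cons c' m y hu2 hv2 h2 p2 =>
        intro m' hm'
        rw [Walk.marksInternal_cons_cons] at hm'
        rcases List.mem_cons.mp hm' with h1 | h1
        · subst h1
          simp only [Walk.firstHead_cons, Option.some_inj] at hf
          exact ⟨rfl, hf.symm ▸ rfl, TransGen.single e⟩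
        · obtain ⟨ha, hb, hcc⟩ := hm m' h1
          exact ⟨ha, hb, TransGen.head e hcc⟩

end DAGLemmas

section SuperMaster

open MixedGraph Relation

variable {V : Type} {E : V → V → Prop}

lemma firstHead_none_eq {G : MixedGraph V} {a b : V} (q : G.Walk a b)
    (h : q.firstHead = none) : a = b := by
  cases q with
  | nil => rfl
  | cons _ _ _ _ => simp at h

lemma supermaster (hE : Acyclic E) {k : ℕ} {c : Finset V} (hck : c.card ≤ k)
    {u v : V} (hne : u ≠ v) (hcov : KCovered E k u v) (bu bv : Bool)
    (hbu : bu = true → ¬ ReflTransGen E u v)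
    (hbv : bv = true → ¬ ReflTransGen E v u) :
    ∃ q : (ofDAG E).Walk u v, q.DConnecting ↑c ∧
      (bu = true → q.firstHead = some true) ∧ (bv = true → q.lastHead = some true) := by
  classical
  set c₁ : Finset V := c.filter
    (fun z => ¬(bu = true ∧ ReflTransGen E u z) ∧ ¬(bv = true ∧ ReflTransGen E v z)) with hc₁def
  have hc1k : c₁.card ≤ k := le_trans (Finset.card_filter_le _ _) hck
  obtain ⟨q, hqpath, hqc⟩ := not_not.mp (hcov c₁ hc1k)
  have hmemc1 : ∀ z : V, z ∈ (↑c₁ : Set V) ↔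
      z ∈ c ∧ ¬(bu = true ∧ ReflTransGen E u z) ∧ ¬(bv = true ∧ ReflTransGen E v z) := by
    intro z
    simp [hc₁def, Finset.mem_filter]
  -- generic elimination of the chain alternatives for an intermediate vertex w
  have helim : ∀ w : V, ((bu = true ∧ ReflTransGen E u w) ∨ (bv = true ∧ ReflTransGen E v w)) →
      (TransGen E w v ∨ TransGen E w u ∨ ∃ z ∈ (↑c₁ : Set V), ReflTransGen E w z) → False := by
    rintro w (⟨hbu', hru⟩ | ⟨hbv', hrv⟩) (htg | htg | ⟨z, hz, hrz⟩)
    · exact hbu hbu' (hru.trans htg.to_reflTransGen)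
    · exact hE u (TransGen.trans_right hru htg)
    · exact ((hmemc1 z).mp hz).2.1 ⟨hbu', hru.trans hrz⟩
    · exact hE w (TransGen.trans_left htg hrv)
    · exact hbv hbv' (hrv.trans htg.to_reflTransGen)
    · exact ((hmemc1 z).mp hz).2.2 ⟨hbv', hrv.trans hrz⟩
  refine ⟨q, ?_, ?_, ?_⟩
  · -- q is d-connecting given the full set c
    intro m hm
    refine ⟨fun hcol => ?_, fun hncol hmemc => ?_⟩
    · obtain ⟨z, hz, hanc⟩ := (hqc m hm).1 hcol
      exact ⟨z, ((hmemc1 z).mp hz).1, hanc⟩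
    · -- m.1 ∈ c but is a non-collider: derive contradiction
      have hnot1 : m.1 ∉ (↑c₁ : Set V) := (hqc m hm).2 hncol
      have hbad : (bu = true ∧ ReflTransGen E u m.1) ∨ (bv = true ∧ ReflTransGen E v m.1) := by
        by_contra hcon
        push_neg at hcon
        exact hnot1 ((hmemc1 m.1).mpr ⟨hmemc, fun hh => hcon.1 hh.1 hh.2, fun hh => hcon.2 hh.1 hh.2⟩)
      obtain ⟨q1, q2, hdec, hl1, hf2, _⟩ := Walk.exists_split_marks q hm
      have hsub1 : q1.marksInternal ⊆ q.marksInternal := by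
        rw [hdec]; intro e he; exact List.mem_append_left _ he
      have hsub2 : q2.marksInternal ⊆ q.marksInternal := by
        rw [hdec]; intro e he; exact List.mem_append_right _ (List.mem_cons_of_mem _ he)
      have hq1c : q1.DConnecting ↑c₁ := fun e he => hqc e (hsub1 he)
      have hq2c : q2.DConnecting ↑c₁ := fun e he => hqc e (hsub2 he)
      have htails : m.2.2 = false ∨ m.2.1 = false := by
        by_cases h1 : m.2.1 = true
        · by_cases h2 : m.2.2 = true
          · exact absurd ⟨h1, h2⟩ hncol
          · exact Or.inl (by simpa using h2)
        · exact Or.inr (by simpa using h1)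
      rcases htails with ht | ht
      · rcases chain1 q2 hq2c (by rw [hf2, ht]) with hh | hh
        · exact helim m.1 hbad (Or.inl hh)
        · exact helim m.1 hbad (Or.inr (Or.inr hh))
      · rcases chain1 q1.reverse hq1c.reverse
            (by rw [Walk.firstHead_reverse, hl1, ht]) with hh | hh
        · exact helim m.1 hbad (Or.inr (Or.inl hh))
        · exact helim m.1 hbad (Or.inr (Or.inr hh))
  · -- bu → firstHead = head
    intro hbu'
    cases hfq : q.firstHead with
    | none => exact absurd (firstHead_none_eq q hfq) hne
    | some hb =>
      cases hb with
      | true => rfl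
      | false =>
        exfalso
        rcases chain1 q hqc hfq with hh | ⟨z, hz, hrz⟩
        · exact hbu hbu' hh.to_reflTransGen
        · exact ((hmemc1 z).mp hz).2.1 ⟨hbu', hrz⟩
  · -- bv → lastHead = head
    intro hbv'
    cases hfq : q.lastHead with
    | none =>
      have : q.reverse.firstHead = none := by rw [Walk.firstHead_reverse, hfq]
      exact absurd (firstHead_none_eq q.reverse this).symm hne
    | some hb =>
      cases hb with
      | true => rfl
      | false =>
        exfalso
        rcases chain1_last q hqc hfq with hh | ⟨z, hz, hrz⟩
        · exact hbv hbv' hh.to_reflTransGen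
        · exact ((hmemc1 z).mp hz).2.2 ⟨hbv', hrz⟩

end SuperMaster

section EdgeLemma

open MixedGraph Relation

variable {V : Type} {E : V → V → Prop}

lemma length_ne_zero_of_ne {G : MixedGraph V} {u v : V} (q : G.Walk u v) (hne : u ≠ v) :
    q.length ≠ 0 := by
  cases q with
  | nil => exact absurd rfl hne
  | cons _ _ _ _ => simp

lemma edge_walk (hE : Acyclic E) {k : ℕ} {c : Finset V} (hck : c.card ≤ k)
    {u v : V} {hu hv : Bool} (h : (kClosure E k).step u v hu hv)
    (du dv : Bool)
    (hdu : du = true → u ∈ c ∧ hu = true)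
    (hdv : dv = true → v ∈ c ∧ hv = true) :
    ∃ W : (ofDAG E).Walk u v, W.length ≠ 0 ∧ W.DConnecting ↑c ∧
      (du = true → W.firstHead = some true) ∧ (dv = true → W.lastHead = some true) ∧
      (hu = false → ¬(∃ z ∈ c, ReflTransGen E u z) → W.firstHead = some false) ∧
      (hv = false → ¬(∃ z ∈ c, ReflTransGen E v z) → W.lastHead = some false) := by
  classical
  rcases h with ⟨hu_eq, hv_eq, hKuv, hTuv⟩ | ⟨hu_eq, hv_eq, hKvu, hTvu⟩ | ⟨hu_eq, hv_eq, hbi⟩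
  · -- directed edge u → v in the closure
    subst hu_eq; subst hv_eq
    have hne : u ≠ v := fun he => hE u (by rw [← he] at hTuv; exact hTuv)
    have hdu' : du = false := by
      cases hdu0 : du with
      | false => rfl
      | true => exact absurd (hdu hdu0).2 (by simp)
    by_cases hAnC : ∃ z ∈ c, ReflTransGen E u z
    · have hbv : dv = true → ¬ ReflTransGen E v u :=
        fun _ hr => hE u (TransGen.trans_left hTuv hr)
      obtain ⟨q, hqc, _, hql⟩ := supermaster hE hck hne hKuv false dv (by simp) hbv
      exact ⟨q, length_ne_zero_of_ne q hne, hqc, by simp [hdu'], hql,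
        fun _ hn => absurd hAnC hn, by simp⟩
    · obtain ⟨W, hf, hl, hm⟩ := exists_dirWalk hTuv
      refine ⟨W, ?_, ?_, by simp [hdu'], fun _ => hl, fun _ _ => hf, by simp⟩
      · cases W with
        | nil => simp at hf
        | cons _ _ _ _ => simp
      · intro m hmm
        refine ⟨fun hcol => absurd hcol.2 (by simp [(hm m hmm).2.1]), fun _ hin => ?_⟩
        exact hAnC ⟨m.1, hin, (hm m hmm).2.2.to_reflTransGen⟩
  · -- directed edge v → u in the closure
    subst hu_eq; subst hv_eq
    have hne : v ≠ u := fun he => hE v (by rw [← he] at hTvu; exact hTvu)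
    have hdv' : dv = false := by
      cases hdv0 : dv with
      | false => rfl
      | true => exact absurd (hdv hdv0).2 (by simp)
    by_cases hAnC : ∃ z ∈ c, ReflTransGen E v z
    · have hbv : du = true → ¬ ReflTransGen E u v :=
        fun _ hr => hE v (TransGen.trans_left hTvu hr)
      obtain ⟨q, hqc, _, hql⟩ := supermaster hE hck hne hKvu false du (by simp) hbv
      refine ⟨q.reverse, ?_, hqc.reverse, ?_, by simp [hdv'], by simp, fun _ hn => absurd hAnC hn⟩
      · cases q with
        | nil => exact absurd rfl hne
        | cons hu2 hv2 h2 p2 =>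
          rw [Walk.reverse_cons]
          rw [Walk.length_append]
          simp
      · intro hdu0
        rw [Walk.firstHead_reverse]
        exact hql hdu0
    · obtain ⟨W, hf, hl, hm⟩ := exists_dirWalk hTvu
      have hWc : W.DConnecting ↑c := by
        intro m hmm
        refine ⟨fun hcol => absurd hcol.2 (by simp [(hm m hmm).2.1]), fun _ hin => ?_⟩
        exact hAnC ⟨m.1, hin, (hm m hmm).2.2.to_reflTransGen⟩
      refine ⟨W.reverse, ?_, hWc.reverse, ?_, by simp [hdv'], by simp, ?_⟩
      · cases W with
        | nil => simp at hf
        | cons hu2 hv2 h2 p2 =>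
          rw [Walk.reverse_cons, Walk.length_append]
          simp
      · intro _
        rw [Walk.firstHead_reverse]
        exact hl
      · intro _ _
        rw [Walk.lastHead_reverse]
        exact hf
  · -- bidirected edge
    subst hu_eq; subst hv_eq
    have hfacts : KCovered E k u v ∧ ¬ ReflTransGen E u v ∧ ¬ ReflTransGen E v u := by
      rcases hbi with ⟨h1, h2, h3, h4⟩ | ⟨h1, h2, h3, h4⟩
      · exact ⟨h1, h3, h4⟩
      · exact ⟨h2, h4, h3⟩
    have hne : u ≠ v := fun he => hfacts.2.1 (he ▸ ReflTransGen.refl)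
    obtain ⟨q, hqc, hqf, hql⟩ := supermaster hE hck hne hfacts.1 du dv
      (fun _ => hfacts.2.1) (fun _ => hfacts.2.2)
    exact ⟨q, length_ne_zero_of_ne q hne, hqc, hqf, hql, by simp, by simp⟩

end EdgeLemma

section GlobalLemma

open MixedGraph Relation

variable {V : Type} {E : V → V → Prop}

lemma append_dconn {G : MixedGraph V} {c : Set V} {a x b : V}
    {W1 : G.Walk a x} {W2 : G.Walk x b}
    (h1 : W1.DConnecting c) (h2 : W2.DConnecting c)
    (hj : ∀ l f, W1.lastHead = some l → W2.firstHead = some f →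
      ((l = true ∧ f = true) → ∃ z ∈ c, G.Anc x z) ∧ (¬(l = true ∧ f = true) → x ∉ c)) :
    (W1.append W2).DConnecting c := by
  intro m hm
  rw [Walk.marksInternal_append] at hm
  rcases List.mem_append.mp hm with hml | hmr
  · exact h1 m hml
  · cases hl : W1.lastHead with
    | none =>
      rw [hl] at hmr
      exact h2 m hmr
    | some l =>
      rw [hl] at hmr
      cases hf : W2.firstHead with
      | none =>
        rw [hf] at hmr
        exact h2 m hmr
      | some f =>
        rw [hf] at hmr
        rcases List.mem_cons.mp hmr with hme | hme
        · subst hme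
          exact hj l f hl hf
        · exact h2 m hme

lemma anc_kClosure {k : ℕ} {u z : V} (h : Relation.ReflTransGen (kClosure E k).dir u z) :
    ReflTransGen E u z := by
  induction h with
  | refl => exact ReflTransGen.refl
  | @tail b' c' hab hd ih =>
    exact ih.trans hd.2.to_reflTransGen

lemma global_walk (hE : Acyclic E) {k : ℕ} {c : Finset V} (hck : c.card ≤ k) {b : V} :
    ∀ {u : V} (p : (kClosure E k).Walk u b) (du : Bool),
    p.DConnecting ↑c →
    (du = true → u ∈ c ∧ p.firstHead = some true) →
    ∃ W : (ofDAG E).Walk u b, W.DConnecting ↑c ∧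
      (du = true → W.firstHead = some true) ∧
      (p.firstHead = some false → ¬(∃ z ∈ c, ReflTransGen E u z) → W.firstHead = some false) := by
  intro u p
  induction p with
  | nil =>
    intro du hconn hd
    refine ⟨Walk.nil _, by intro m hm; simp at hm, ?_, ?_⟩
    · intro hdu
      exact absurd (hd hdu).2 (by simp)
    · intro hf
      simp at hf
  | @cons u u' b hu hv1 h p' ih =>
    intro du hconn hd
    have hdu_lift : du = true → u ∈ c ∧ hu = true := by
      intro hdu
      refine ⟨(hd hdu).1, ?_⟩
      have := (hd hdu).2
      simpa using this
    cases p' with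
    | nil =>
      obtain ⟨W, hlen, hWc, hWf, hWl, hWtf, hWtl⟩ :=
        edge_walk hE hck h du false hdu_lift (by simp)
      refine ⟨W, hWc, hWf, ?_⟩
      intro hf hn
      have : hu = false := by simpa using hf
      exact hWtf this hn
    | @cons u' u2 b hu2 hv2 h2 p'' =>
      have hmement : (u', hv1, hu2) ∈ (Walk.cons hu hv1 h
          (Walk.cons hu2 hv2 h2 p'')).marksInternal := by
        rw [Walk.marksInternal_cons_cons]
        exact List.mem_cons_self
      have hucmem : ∀ x : V, x ∈ (↑c : Set V) ↔ x ∈ c := by intro x; simp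
      by_cases hc' : u' ∈ c
      · -- u' is a collider of p, in c
        have hcoll : hv1 = true ∧ hu2 = true := by
          by_contra hcon
          exact ((hconn _ hmement).2 hcon) ((hucmem u').mpr hc')
        obtain ⟨W', hW'c, hW'f, _⟩ := ih true hconn.tail
          (fun _ => ⟨hc', by simp [hcoll.2]⟩)
        obtain ⟨W1, hlen, hW1c, hW1f, hW1l, hW1tf, hW1tl⟩ :=
          edge_walk hE hck h du true hdu_lift (fun _ => ⟨hc', hcoll.1⟩)
        refine ⟨W1.append W', append_dconn hW1c hW'c ?_, ?_, ?_⟩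
        · intro l f hl hf
          have hlt : l = true := by
            have := hW1l rfl; rw [hl] at this; simpa using this.symm
          have hft : f = true := by
            have := hW'f rfl; rw [hf] at this; simpa using this.symm
          refine ⟨fun _ => ⟨u', (hucmem u').mpr hc', ReflTransGen.refl⟩,
            fun hn => absurd ⟨hlt, hft⟩ hn⟩
        · intro hdu
          exact Walk.firstHead_append _ _ (hW1f hdu)
        · intro hf hn
          have : hu = false := by simpa using hf
          exact Walk.firstHead_append _ _ (hW1tf this hn)
      · by_cases hAnC' : ∃ z ∈ c, ReflTransGen E u' z
        · -- u' not in c but an ancestor of c : free junction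
          obtain ⟨W', hW'c, _, _⟩ := ih false hconn.tail (by simp)
          obtain ⟨W1, hlen, hW1c, hW1f, hW1l, hW1tf, hW1tl⟩ :=
            edge_walk hE hck h du false hdu_lift (by simp)
          refine ⟨W1.append W', append_dconn hW1c hW'c ?_, ?_, ?_⟩
          · intro l f _ _
            obtain ⟨z, hz, hrz⟩ := hAnC'
            exact ⟨fun _ => ⟨z, (hucmem z).mpr hz, hrz⟩,
              fun _ hmem => hc' ((hucmem u').mp hmem)⟩
          · intro hdu
            exact Walk.firstHead_append _ _ (hW1f hdu)
          · intro hf hn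
            have : hu = false := by simpa using hf
            exact Walk.firstHead_append _ _ (hW1tf this hn)
        · -- u' not an ancestor of c: it is a non-collider of p
          have hncol : ¬(hv1 = true ∧ hu2 = true) := by
            intro hcol
            obtain ⟨z, hz, hanc⟩ := (hconn _ hmement).1 hcol
            exact hAnC' ⟨z, (hucmem z).mp hz, anc_kClosure hanc⟩
          obtain ⟨W', hW'c, _, hW't⟩ := ih false hconn.tail (by simp)
          obtain ⟨W1, hlen, hW1c, hW1f, hW1l, hW1tf, hW1tl⟩ :=
            edge_walk hE hck h du false hdu_lift (by simp)
          have honef : hv1 = false ∨ hu2 = false := by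
            by_cases h1 : hv1 = true
            · by_cases h2 : hu2 = true
              · exact absurd ⟨h1, h2⟩ hncol
              · exact Or.inr (by simpa using h2)
            · exact Or.inl (by simpa using h1)
          refine ⟨W1.append W', append_dconn hW1c hW'c ?_, ?_, ?_⟩
          · intro l f hl hf
            have hnotboth : ¬(l = true ∧ f = true) := by
              rcases honef with h1 | h1
              · have := hW1tl h1 hAnC'
                rw [hl] at this
                intro hcc
                rw [hcc.1] at this
                simp at this
              · have := hW't (by simp [h1]) hAnC'
                rw [hf] at this
                intro hcc
                rw [hcc.2] at this
                simp at this
            exact ⟨fun hcc => absurd hcc hnotboth,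
              fun _ hmem => hc' ((hucmem u').mp hmem)⟩
          · intro hdu
            exact Walk.firstHead_append _ _ (hW1f hdu)
          · intro hf hn
            have : hu = false := by simpa using hf
            exact Walk.firstHead_append _ _ (hW1tf this hn)

end GlobalLemma

section WalkToPath

open MixedGraph Relation

variable {V : Type} {E : V → V → Prop}

lemma splice_dconn (hE : Acyclic E) {c : Set V} {a x b : V}
    (A : (ofDAG E).Walk a x) (B : (ofDAG E).Walk x x) (C : (ofDAG E).Walk x b)
    (hconn : (A.append (B.append C)).DConnecting c) (hB : B.length ≠ 0) :
    (A.append C).DConnecting c := by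
  have hW := Walk.marksInternal_append A (B.append C)
  have hBC := Walk.marksInternal_append B C
  cases B with
  | nil => simp at hB
  | @cons x xm x' hbu hbv hb B' =>
    obtain ⟨lB, hlB⟩ := Walk.lastHead_isSome_cons hb B'
    have hBfirst : ((Walk.cons hbu hbv hb B').append C).firstHead = some hbu :=
      Walk.firstHead_append _ _ (by simp)
    have hsubBC : ((Walk.cons hbu hbv hb B').append C).marksInternal ⊆
        (A.append ((Walk.cons hbu hbv hb B').append C)).marksInternal := by
      rw [hW]
      intro e he
      apply List.mem_append_right
      cases hla : A.lastHead with
      | none => exact he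
      | some l =>
        rw [hBfirst]
        exact List.mem_cons_of_mem _ he
    have hsubB : (Walk.cons hbu hbv hb B').marksInternal ⊆
        (A.append ((Walk.cons hbu hbv hb B').append C)).marksInternal := by
      intro e he
      apply hsubBC
      rw [hBC]
      exact List.mem_append_left _ he
    have hsubC : C.marksInternal ⊆
        (A.append ((Walk.cons hbu hbv hb B').append C)).marksInternal := by
      intro e he
      apply hsubBC
      rw [hBC, hlB]
      cases hfc : C.firstHead with
      | none => exact List.mem_append_right _ he
      | some f => exact List.mem_append_right _ (List.mem_cons_of_mem _ he)
    have hsubA : A.marksInternal ⊆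
        (A.append ((Walk.cons hbu hbv hb B').append C)).marksInternal := by
      rw [hW]
      intro e he
      exact List.mem_append_left _ he
    refine append_dconn (fun e he => hconn e (hsubA he)) (fun e he => hconn e (hsubC he)) ?_
    intro l f hl hf
    have he1 : (x, l, hbu) ∈ (A.append ((Walk.cons hbu hbv hb B').append C)).marksInternal := by
      rw [hW, hl, hBfirst]
      exact List.mem_append_right _ (List.mem_cons_self)
    have he2 : (x, lB, f) ∈ (A.append ((Walk.cons hbu hbv hb B').append C)).marksInternal := by
      apply hsubBC
      rw [hBC, hlB, hf]
      exact List.mem_append_right _ (List.mem_cons_self)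
    constructor
    · rintro ⟨hl1, hf1⟩
      cases hbu0 : hbu with
      | true => exact (hconn _ he1).1 ⟨hl1, hbu0⟩
      | false =>
        have hc1 : (Walk.cons hbu hbv hb B').DConnecting c := fun e he => hconn e (hsubB he)
        rcases chain1 (Walk.cons hbu hbv hb B') hc1 (by simp [hbu0]) with hh | hh
        · exact absurd hh (hE x)
        · exact hh
    · intro hncol hmem
      by_cases hl0 : l = true
      · have hf0 : f = false := by
          cases hf1 : f with
          | true => exact absurd ⟨hl0, hf1⟩ hncol
          | false => rfl
        exact (hconn _ he2).2 (by rw [hf0]; simp) hmem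
      · exact (hconn _ he1).2 (by rw [show l = false by simpa using hl0]; simp) hmem

lemma walk_to_path (hE : Acyclic E) {c : Set V} :
    ∀ (n : ℕ) {a b : V} (W : (ofDAG E).Walk a b), W.length ≤ n → W.DConnecting c →
    ∃ P : (ofDAG E).Walk a b, P.IsPath ∧ P.DConnecting c := by
  intro n
  induction n with
  | zero =>
    intro a b W hl hc
    cases W with
    | nil => exact ⟨Walk.nil _, by simp [Walk.IsPath], hc⟩
    | cons _ _ _ _ => simp at hl
  | succ n ihn =>
    intro a b W hl hc
    by_cases hnd : W.support.Nodup
    · exact ⟨W, hnd, hc⟩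
    · obtain ⟨x, A, B, C, hWeq, hB⟩ := Walk.exists_split_dup W hnd
      subst hWeq
      have hlen : (A.append C).length ≤ n := by
        rw [Walk.length_append, Walk.length_append] at hl
        rw [Walk.length_append]
        omega
      exact ihn (A.append C) hlen (splice_dconn hE A B C hc hB)

lemma dconn_symm {G : MixedGraph V} {c : Set V} {a b : V} (h : G.DConn c a b) :
    G.DConn c b a := by
  obtain ⟨p, hp, hc⟩ := h
  refine ⟨p.reverse, ?_, hc.reverse⟩
  show p.reverse.support.Nodup
  rw [Walk.support_reverse]
  exact List.nodup_reverse.mpr hp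

end WalkToPath

/-- the `k`-closure of a DAG is a maximal ancestral graph. -/
theorem kClosure_isMAG {V : Type} (E : V → V → Prop) (hE : Acyclic E) (k : ℕ) :
    IsMAG (kClosure E k) := by
  classical
  have hdirE : ∀ {x y : V}, Relation.TransGen (kClosure E k).dir x y → Relation.TransGen E x y := by
    intro x y h
    have h1 : Relation.TransGen (Relation.TransGen E) x y :=
      Relation.TransGen.mono (fun a b (hab : (kClosure E k).dir a b) => hab.2) x y h
    rwa [Relation.transGen_idem] at h1
  refine ⟨?_, ?_, ?_⟩
  · intro a hTG
    exact hE a (hdirE hTG)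
  · intro a b hTG hbi
    have hr : Relation.ReflTransGen E a b := (hdirE hTG).to_reflTransGen
    rcases hbi with h | h
    · exact h.2.2.1 hr
    · exact h.2.2.2 hr
  · intro a b hab hnadj
    have hK : ¬KCovered E k a b ∨ ¬KCovered E k b a := by
      by_contra hcon
      push_neg at hcon
      apply hnadj
      by_cases hR : Relation.ReflTransGen E a b
      · rcases Relation.reflTransGen_iff_eq_or_transGen.mp hR with he | htg
        · exact absurd he.symm hab
        · exact Or.inl ⟨hcon.1, htg⟩
      · by_cases hR2 : Relation.ReflTransGen E b a
        · rcases Relation.reflTransGen_iff_eq_or_transGen.mp hR2 with he | htg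
          · exact absurd he hab
          · exact Or.inr (Or.inl ⟨hcon.2, htg⟩)
        · exact Or.inr (Or.inr (Or.inl ⟨hcon.1, hcon.2, hR, hR2⟩))
    obtain ⟨c, hck, hsep⟩ : ∃ c : Finset V, c.card ≤ k ∧ (ofDAG E).DSep ↑c a b := by
      rcases hK with h | h
      · unfold KCovered at h
        push_neg at h
        obtain ⟨c, hck, hs⟩ := h
        exact ⟨c, hck, hs⟩
      · unfold KCovered at h
        push_neg at h
        obtain ⟨c, hck, hs⟩ := h
        exact ⟨c, hck, fun hcn => hs (dconn_symm hcn)⟩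
    refine ⟨↑c, ?_⟩
    rintro ⟨p, hpath, hpc⟩
    obtain ⟨W, hWc, -, -⟩ := global_walk hE hck p false hpc (by simp)
    obtain ⟨P, hP, hPc⟩ := walk_to_path hE W.length W le_rfl hWc
    exact hsep ⟨P, hP, hPc⟩
end
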